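/- (Continuity of the stabilisation map, Section 2.2 of 'Stability of concordance embeddings', continuous analogue.) If P is compact Hausdorff, then the assignment e ↦ σ(e) defines a continuous map σ : CF(P,M) → CF(P×J, M×J), where CF(P×J, M×J) is the space of continuous concordance maps of P×J in M×J relative to (A×J) ∪ (P×{−1,1}), both mapping spaces carrying the compact-open topology; moreover σ restricts to a map between the subspaces of injective concordance maps. -/

import Mathlib

/-!
STATEMENT 13: continuity of the stabilisation map
`σ : CF(P,M) → CF(P×J, M×J)` (compact-open topologies), for `P` compact Hausdorff; moreover
`σ` restricts to a map between the subspaces of injective concordance maps.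
-/
open Set unitInterval Topology

noncomputable section

abbrev JJ : Set ℝ := Set.Icc (-1 : ℝ) 1

/-- The polar parametrisation `Λ(r,θ) = ((1−r)cos(θ+π), (1−r)sin(θ+π) + 1)`. -/
def Lam : ℝ × ℝ → ℝ × ℝ :=
  fun p => ((1 - p.1) * Real.cos (p.2 + Real.pi), (1 - p.1) * Real.sin (p.2 + Real.pi) + 1)

def D1 : Set (ℝ × ℝ) := {z | z.1 ∈ JJ ∧ z.2 ∈ Set.Icc (0:ℝ) 1 ∧ z.1 ^ 2 + (z.2 - 1) ^ 2 ≤ 1}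
def D2 : Set (ℝ × ℝ) := {z | z.1 ∈ JJ ∧ z.2 ∈ Set.Icc (0:ℝ) 1 ∧ 1 ≤ z.1 ^ 2 + (z.2 - 1) ^ 2}

/-- `φ : P × I → M × I` is a continuous concordance map of `P` in `M` relative to `A`. -/
def IsConcMap {M : Type} [TopologicalSpace M] (P A : Set M) (φ : ↥P × ↥I → M × ↥I) : Prop :=
  Continuous φ ∧
  (∀ x : ↥P × ↥I, ((φ x).2 = 0 ↔ x.2 = 0) ∧ ((φ x).2 = 1 ↔ x.2 = 1)) ∧
  ∃ U : Set (↥P × ↥I), IsOpen U ∧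
    ({x : ↥P × ↥I | x.2 = 0} ∪ {x : ↥P × ↥I | (x.1 : M) ∈ A}) ⊆ U ∧
    ∀ x ∈ U, φ x = ((x.1 : M), x.2)

/-- `F : P × J × I → M × J × I` satisfies the two clauses defining the stabilisation `σ(e)`:
on `P × D₁` it is given (in the polar coordinates `Λ`) by
`σ(e)(p, Λ(r,θ)) = (e_M(p,r), Λ(e_I(p,r), θ))`, and on `P × D₂` it is the inclusion. -/
def IsSigmaOf {M : Type} [TopologicalSpace M] (P : Set M)
    (e : ↥P × ↥I → M × ↥I) (F : ↥P × ↥JJ × ↥I → M × ↥JJ × ↥I) : Prop :=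
  (∀ (p : ↥P) (s : ↥JJ) (t : ↥I) (r : ↥I) (θ : ℝ), θ ∈ Set.Icc 0 Real.pi →
    ((s : ℝ), (t : ℝ)) = Lam ((r : ℝ), θ) →
    (F (p, s, t)).1 = (e (p, r)).1 ∧
    (((F (p, s, t)).2.1 : ℝ), ((F (p, s, t)).2.2 : ℝ)) = Lam (((e (p, r)).2 : ℝ), θ)) ∧
  (∀ (p : ↥P) (s : ↥JJ) (t : ↥I), ((s : ℝ), (t : ℝ)) ∈ D2 → F (p, s, t) = ((p : M), s, t))

/-- `F : P × J × I → M × J × I` is a continuous concordance map of `P × J` in `M × J`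
relative to `(A × J) ∪ (P × {−1,1})`. -/
def IsConcMapJ {M : Type} [TopologicalSpace M] (P A : Set M)
    (F : ↥P × ↥JJ × ↥I → M × ↥JJ × ↥I) : Prop :=
  Continuous F ∧
  (∀ x : ↥P × ↥JJ × ↥I, ((F x).2.2 = 0 ↔ x.2.2 = 0) ∧ ((F x).2.2 = 1 ↔ x.2.2 = 1)) ∧
  ∃ U : Set (↥P × ↥JJ × ↥I), IsOpen U ∧
    ({x : ↥P × ↥JJ × ↥I | x.2.2 = 0} ∪
     {x : ↥P × ↥JJ × ↥I | (x.1 : M) ∈ A ∨ (x.2.1 : ℝ) = -1 ∨ (x.2.1 : ℝ) = 1}) ⊆ U ∧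
    ∀ x ∈ U, F x = ((x.1 : M), x.2.1, x.2.2)

/-!
In cartesian coordinates `σ(e)` acts radially about the centre `(0, 1)` of `D₁`: a point of `D₁`
at distance `ρ` from the centre, lying over `p`, is sent to the point in the same direction at
distance `1 - e_I(p, 1 - ρ)`, with `M`-coordinate `e_M(p, 1 - ρ)`. Since `e_I(p, 0) = 0` this is
the identity on the arc `ρ = 1`, and since `e_I(p, 1) = 1` the image collapses continuously
onto the centre as `ρ → 0`. All formulas are jointly continuous in `(e, p, s, t)`; evaluation
`C(P × I, M × I) × (P × I) → M × I` is continuous because `P × I` is locally compact, so currying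
gives continuity of `e ↦ σ(e)`. For injectivity, the distance of `σ(e)(p, s, t)` from the centre
recovers `e_I` and hence the point `e(p, 1 - ρ)`.
-/

namespace Stabilisation

lemma abs_div_mul_le_abs {a b c : ℝ} (h : |c| ≤ b) : |a / b * c| ≤ |a| := by
  rw [abs_mul, abs_div, div_mul_eq_mul_div, mul_div_assoc]
  exact mul_le_of_le_one_right (abs_nonneg a)
    (div_le_one_of_le₀ (h.trans (le_abs_self b)) (abs_nonneg b))

/-- At the zeros of `h` the value is `0` by the convention `x / 0 = 0`; it is the limit there
because `|f / h * g| ≤ |f|`. -/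
lemma continuous_div_mul_of_abs_le {Z : Type*} [TopologicalSpace Z] {f g h : Z → ℝ}
    (hf : Continuous f) (hg : Continuous g) (hh : Continuous h) (hgh : ∀ x, |g x| ≤ h x)
    (hf0 : ∀ x, h x = 0 → f x = 0) : Continuous fun x => f x / h x * g x := by
  refine continuous_iff_continuousAt.mpr fun x₀ => ?_
  by_cases hx₀ : h x₀ = 0
  · have hlim : Filter.Tendsto (fun x => |f x|) (𝓝 x₀) (𝓝 0) := by
      simpa [hf0 x₀ hx₀] using hf.abs.tendsto x₀
    simpa [ContinuousAt, hx₀] using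
      squeeze_zero_norm (fun x => abs_div_mul_le_abs (a := f x) (hgh x)) hlim
  · exact ((hf.continuousAt.div hh.continuousAt hx₀).mul hg.continuousAt)

/-- The distance from `(0, 1)`, the centre of the half-disc `D₁`; the point `Λ(r, θ)` is at
distance `|1 - r|`. -/
def centreDist (z : ℝ × ℝ) : ℝ := √(z.1 ^ 2 + (1 - z.2) ^ 2)

lemma centreDist_nonneg (z : ℝ × ℝ) : 0 ≤ centreDist z := Real.sqrt_nonneg _

lemma abs_fst_le_centreDist (z : ℝ × ℝ) : |z.1| ≤ centreDist z :=
  Real.abs_le_sqrt (by nlinarith [sq_nonneg (1 - z.2)])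

lemma abs_one_sub_snd_le_centreDist (z : ℝ × ℝ) : |1 - z.2| ≤ centreDist z :=
  Real.abs_le_sqrt (by nlinarith [sq_nonneg z.1])

lemma centreDist_eq_zero_iff {z : ℝ × ℝ} : centreDist z = 0 ↔ z = (0, 1) := by
  rw [centreDist, Real.sqrt_eq_zero (by positivity), Prod.ext_iff]
  constructor
  · intro h
    constructor <;> nlinarith [sq_nonneg z.1, sq_nonneg (1 - z.2)]
  · rintro ⟨h1, h2⟩
    simp [h1, h2]

lemma continuous_centreDist : Continuous centreDist := by
  unfold centreDist
  fun_prop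

lemma centreDist_Lam (r θ : ℝ) : centreDist (Lam (r, θ)) = |1 - r| := by
  rw [centreDist, Lam, ← Real.sqrt_sq_eq_abs]
  congr 1
  linear_combination (1 - r) ^ 2 * Real.cos_sq_add_sin_sq (θ + Real.pi)

lemma one_le_centreDist_of_mem_D2 {z : ℝ × ℝ} (hz : z ∈ D2) : 1 ≤ centreDist z :=
  Real.one_le_sqrt.mpr (by nlinarith [hz.2.2])

def centreHomothety (k : ℝ) (z : ℝ × ℝ) : ℝ × ℝ := (k * z.1, 1 - k * (1 - z.2))

lemma centreHomothety_one (z : ℝ × ℝ) : centreHomothety 1 z = z := by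
  simp [centreHomothety]

lemma centreHomothety_centre (k : ℝ) : centreHomothety k (0, 1) = (0, 1) := by
  simp [centreHomothety]

lemma centreDist_centreHomothety (k : ℝ) (z : ℝ × ℝ) :
    centreDist (centreHomothety k z) = |k| * centreDist z := by
  rw [centreDist, centreDist, centreHomothety, ← Real.sqrt_sq_eq_abs, ← Real.sqrt_mul (sq_nonneg k)]
  congr 1
  ring

lemma centreHomothety_injective {k : ℝ} (hk : k ≠ 0) : Function.Injective (centreHomothety k) := by
  intro z z' h
  simp only [centreHomothety, Prod.ext_iff, mul_right_inj' hk, sub_right_inj] at h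
  exact Prod.ext h.1 h.2

lemma centreHomothety_Lam (k r θ : ℝ) :
    centreHomothety k (Lam (r, θ)) = Lam (1 - k * (1 - r), θ) := by
  simp only [centreHomothety, Lam, Prod.ext_iff]
  constructor <;> ring

lemma snd_centreHomothety_eq_one_iff {k : ℝ} (hk : k ≠ 0) {z : ℝ × ℝ} :
    (centreHomothety k z).2 = 1 ↔ z.2 = 1 := by
  rw [centreHomothety, sub_eq_self, mul_eq_zero, or_iff_right hk, sub_eq_zero, eq_comm]

/-- The `J × I` part of `σ(e)`, with `u` standing for `e_I(p, 1 - ρ)`, `ρ = centreDist z`. -/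
def stabPlane (u : ℝ) (z : ℝ × ℝ) : ℝ × ℝ :=
  if centreDist z ≤ 1 then centreHomothety ((1 - u) / centreDist z) z else z

section stabPlane

variable {u : ℝ} {z : ℝ × ℝ}

lemma stabPlane_of_centreDist_le (h : centreDist z ≤ 1) :
    stabPlane u z = centreHomothety ((1 - u) / centreDist z) z := if_pos h

lemma stabPlane_centre (u : ℝ) : stabPlane u (0, 1) = (0, 1) := by
  rw [stabPlane_of_centreDist_le (by rw [centreDist_eq_zero_iff.mpr rfl]; exact zero_le_one),
    centreHomothety_centre]

lemma stabPlane_zero_of_one_le_centreDist (h : 1 ≤ centreDist z) : stabPlane 0 z = z := by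
  rcases h.eq_or_lt with h1 | h1
  · rw [stabPlane_of_centreDist_le h1.ge, ← h1, sub_zero, div_one, centreHomothety_one]
  · exact if_neg h1.not_ge

lemma stabPlane_one_sub_centreDist : stabPlane (1 - centreDist z) z = z := by
  by_cases h : centreDist z ≤ 1
  · rw [stabPlane_of_centreDist_le h, sub_sub_cancel]
    rcases eq_or_ne (centreDist z) 0 with h0 | h0
    · rw [centreDist_eq_zero_iff.mp h0, centreHomothety_centre]
    · rw [div_self h0, centreHomothety_one]
  · exact if_neg h

lemma stabPlane_Lam {r θ : ℝ} (hr : r ∈ I) (hu : r = 1 → u = 1) :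
    stabPlane u (Lam (r, θ)) = Lam (u, θ) := by
  have hdist : centreDist (Lam (r, θ)) = 1 - r := by
    rw [centreDist_Lam, abs_of_nonneg (sub_nonneg.mpr hr.2)]
  rw [stabPlane_of_centreDist_le (by rw [hdist]; linarith [hr.1]), hdist]
  rcases eq_or_lt_of_le hr.2 with rfl | hr
  · simp [hu rfl, Lam, centreHomothety_centre]
  · rw [centreHomothety_Lam, div_mul_cancel₀ _ (sub_ne_zero.mpr hr.ne'), sub_sub_cancel]

lemma stabPlane_mem (hu : u ∈ I) (hz : z ∈ JJ ×ˢ I) : stabPlane u z ∈ JJ ×ˢ I := by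
  by_cases h : centreDist z ≤ 1
  · rw [stabPlane_of_centreDist_le h]
    have hu' : |1 - u| ≤ 1 := by rw [abs_le]; constructor <;> linarith [hu.1, hu.2]
    have hk : 0 ≤ (1 - u) / centreDist z := div_nonneg (by linarith [hu.2]) (centreDist_nonneg z)
    have hs := (abs_div_mul_le_abs (a := 1 - u) (abs_fst_le_centreDist z)).trans hu'
    have ht := (abs_div_mul_le_abs (a := 1 - u) (abs_one_sub_snd_le_centreDist z)).trans hu'
    have ht0 : 0 ≤ (1 - u) / centreDist z * (1 - z.2) := mul_nonneg hk (by linarith [hz.2.2])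
    rw [abs_le] at hs ht
    simp only [centreHomothety, Set.mem_prod, Set.mem_Icc]
    exact ⟨hs, by linarith, by linarith⟩
  · rwa [stabPlane, if_neg h]

/-- The level `u` can be read off from the image point. -/
lemma min_centreDist_stabPlane (hu : u ∈ I) (hu0 : 1 ≤ centreDist z → u = 0)
    (hu1 : centreDist z = 0 → u = 1) : min (centreDist (stabPlane u z)) 1 = 1 - u := by
  by_cases h : 1 ≤ centreDist z
  · rw [hu0 h, stabPlane_zero_of_one_le_centreDist h, min_eq_right h, sub_zero]
  rcases eq_or_ne (centreDist z) 0 with h0 | h0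
  · rw [centreDist_eq_zero_iff.mp h0, stabPlane_centre, hu1 h0,
      centreDist_eq_zero_iff.mpr rfl]
    simp
  · rw [stabPlane_of_centreDist_le (not_le.mp h).le, centreDist_centreHomothety,
      abs_of_nonneg (div_nonneg (by linarith [hu.2]) (centreDist_nonneg z)),
      div_mul_cancel₀ _ h0, min_eq_left (by linarith [hu.1])]

lemma snd_stabPlane_eq_zero_iff (hu : u ∈ I) (hu0 : u = 0 ↔ 1 ≤ centreDist z)
    (hu1 : centreDist z = 0 → u = 1) : (stabPlane u z).2 = 0 ↔ z.2 = 0 := by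
  by_cases h : 1 ≤ centreDist z
  · rw [hu0.mpr h, stabPlane_zero_of_one_le_centreDist h]
  refine iff_of_false (fun h2 => h (hu0.mp ?_)) (fun h2 => h ?_)
  · have hfar : 1 ≤ centreDist (stabPlane u z) := by
      simpa [h2] using abs_one_sub_snd_le_centreDist (stabPlane u z)
    have := min_centreDist_stabPlane hu (fun h' => absurd h' h) hu1
    rw [min_eq_right hfar] at this
    linarith
  · simpa [h2] using abs_one_sub_snd_le_centreDist z

lemma snd_stabPlane_eq_one_iff (hu0 : 1 ≤ centreDist z → u = 0)
    (hu1 : u = 1 ↔ centreDist z = 0) : (stabPlane u z).2 = 1 ↔ z.2 = 1 := by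
  by_cases h : 1 ≤ centreDist z
  · rw [hu0 h, stabPlane_zero_of_one_le_centreDist h]
  rcases eq_or_ne (centreDist z) 0 with h0 | h0
  · rw [centreDist_eq_zero_iff.mp h0, stabPlane_centre]
  · rw [stabPlane_of_centreDist_le (not_le.mp h).le, snd_centreHomothety_eq_one_iff]
    exact div_ne_zero (sub_ne_zero.mpr (Ne.symm (mt hu1.mp h0))) h0

lemma stabPlane_inj_of_min_centreDist_eq {z' : ℝ × ℝ} (hu0 : 1 ≤ centreDist z → u = 0)
    (hu1 : u = 1 → centreDist z = 0) (hd : min (centreDist z) 1 = min (centreDist z') 1)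
    (h : stabPlane u z = stabPlane u z') : z = z' := by
  by_cases h1 : 1 ≤ centreDist z
  · rw [min_eq_right h1, eq_comm, min_eq_right_iff] at hd
    rwa [hu0 h1, stabPlane_zero_of_one_le_centreDist h1,
      stabPlane_zero_of_one_le_centreDist hd] at h
  have h1 := (not_le.mp h1).le
  have hdd : centreDist z' = centreDist z := by
    rw [min_eq_left h1] at hd
    rcases le_total (centreDist z') 1 with h' | h'
    · rwa [min_eq_left h', eq_comm] at hd
    · rw [min_eq_right h'] at hd
      linarith
  rw [stabPlane_of_centreDist_le h1, stabPlane_of_centreDist_le (hdd ▸ h1), hdd] at h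
  rcases eq_or_ne (centreDist z) 0 with h0 | h0
  · rw [centreDist_eq_zero_iff.mp h0, centreDist_eq_zero_iff.mp (hdd.trans h0)]
  · exact centreHomothety_injective
      (div_ne_zero (sub_ne_zero.mpr (Ne.symm (mt hu1 h0))) h0) h

variable {Z : Type*} [TopologicalSpace Z]

lemma continuous_stabPlane {u : Z → ℝ} {z : Z → ℝ × ℝ} (hu : Continuous u) (hz : Continuous z)
    (hu0 : ∀ x, centreDist (z x) = 1 → u x = 0) (hu1 : ∀ x, centreDist (z x) = 0 → u x = 1) :
    Continuous fun x => stabPlane (u x) (z x) := by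
  have hd := continuous_centreDist.comp hz
  have hcoord {g : Z → ℝ} (hg : Continuous g) (hgd : ∀ x, |g x| ≤ centreDist (z x)) :
      Continuous fun x => (1 - u x) / centreDist (z x) * g x :=
    continuous_div_mul_of_abs_le (continuous_const.sub hu) hg hd hgd
      (fun x h => sub_eq_zero.mpr (hu1 x h).symm)
  refine Continuous.if_le ?_ hz hd continuous_const fun x h => ?_
  · exact (hcoord (continuous_fst.comp hz) fun x => abs_fst_le_centreDist _).prodMk
      (continuous_const.sub
        (hcoord (continuous_const.sub (continuous_snd.comp hz))
          fun x => abs_one_sub_snd_le_centreDist _))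
  · rw [hu0 x h, h, sub_zero, div_one, centreHomothety_one]

end stabPlane

/-- The radius `r` of the polar coordinates `Λ(r, θ)`, extended by `0` outside `D₁`. -/
def radialParam (z : ℝ × ℝ) : I := Set.projIcc 0 1 zero_le_one (1 - centreDist z)

lemma coe_radialParam (z : ℝ × ℝ) : (radialParam z : ℝ) = 1 - min (centreDist z) 1 := by
  rw [radialParam, Set.coe_projIcc, min_eq_right (by linarith [centreDist_nonneg z])]
  rcases le_total (centreDist z) 1 with h | h
  · rw [min_eq_left h, max_eq_right (by linarith)]
  · rw [min_eq_right h, max_eq_left (by linarith)]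
    ring

lemma radialParam_eq_zero_iff {z : ℝ × ℝ} : radialParam z = 0 ↔ 1 ≤ centreDist z := by
  rw [← Set.Icc.coe_eq_zero, coe_radialParam, sub_eq_zero, eq_comm, min_eq_right_iff]

lemma radialParam_eq_one_iff {z : ℝ × ℝ} : radialParam z = 1 ↔ centreDist z = 0 := by
  rw [← Set.Icc.coe_eq_one, coe_radialParam, sub_eq_self]
  constructor
  · intro h
    rcases min_choice (centreDist z) 1 with h' | h' <;> rw [h'] at h
    · exact h
    · exact absurd h one_ne_zero
  · intro h
    rw [h, min_eq_left zero_le_one]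

lemma radialParam_Lam (r : I) (θ : ℝ) : radialParam (Lam (r, θ)) = r := by
  rw [radialParam, centreDist_Lam, abs_of_nonneg (sub_nonneg.mpr r.2.2), sub_sub_cancel,
    Set.projIcc_of_mem _ r.2]

lemma stabPlane_radialParam (z : ℝ × ℝ) : stabPlane (radialParam z) z = z := by
  rcases le_total (centreDist z) 1 with h | h
  · rw [coe_radialParam, min_eq_left h, stabPlane_one_sub_centreDist]
  · rw [radialParam_eq_zero_iff.mpr h, Set.Icc.coe_zero, stabPlane_zero_of_one_le_centreDist h]

lemma continuous_radialParam : Continuous radialParam :=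
  continuous_projIcc.comp (continuous_const.sub continuous_centreDist)


def toPlane (w : JJ × I) : ℝ × ℝ := (w.1, w.2)

lemma toPlane_mem (w : JJ × I) : toPlane w ∈ JJ ×ˢ I := ⟨w.1.2, w.2.2⟩

lemma isEmbedding_toPlane : IsEmbedding toPlane :=
  IsEmbedding.subtypeVal.prodMap IsEmbedding.subtypeVal

lemma one_le_centreDist_toPlane {w : JJ × I}
    (hw : w.2 = 0 ∨ (w.1 : ℝ) = -1 ∨ (w.1 : ℝ) = 1) : 1 ≤ centreDist (toPlane w) := by
  rcases hw with h | h | h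
  · simpa [toPlane, h] using abs_one_sub_snd_le_centreDist (toPlane w)
  all_goals simpa [toPlane, h] using abs_fst_le_centreDist (toPlane w)

def stabSquare (u : I) (w : JJ × I) : JJ × I :=
  (⟨(stabPlane u (toPlane w)).1, (stabPlane_mem u.2 (toPlane_mem w)).1⟩,
    ⟨(stabPlane u (toPlane w)).2, (stabPlane_mem u.2 (toPlane_mem w)).2⟩)

lemma toPlane_stabSquare (u : I) (w : JJ × I) :
    toPlane (stabSquare u w) = stabPlane u (toPlane w) := rfl

lemma stabSquare_radialParam (w : JJ × I) : stabSquare (radialParam (toPlane w)) w = w :=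
  isEmbedding_toPlane.injective (stabPlane_radialParam _)

variable {X Y : Type*}

def radialProj (x : X × JJ × I) : X × I := (x.1, radialParam (toPlane x.2))

/-- The stabilisation `σ(e)`, written in cartesian coordinates. -/
def stabilisation (e : X × I → Y × I) (x : X × JJ × I) : Y × JJ × I :=
  ((e (radialProj x)).1, stabSquare (e (radialProj x)).2 x.2)

lemma stabilisation_eq_of_apply_radialProj {e : X × I → Y × I} {f : X → Y} {x : X × JJ × I}
    (h : e (radialProj x) = (f x.1, (radialProj x).2)) : stabilisation e x = (f x.1, x.2) := by
  rw [stabilisation, h, radialProj, stabSquare_radialParam]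

def PreservesEnds (e : X × I → Y × I) : Prop :=
  ∀ x, ((e x).2 = 0 ↔ x.2 = 0) ∧ ((e x).2 = 1 ↔ x.2 = 1)

namespace PreservesEnds

variable {e : X × I → Y × I} (he : PreservesEnds e) (x : X × JJ × I)
include he

lemma coe_apply_radialProj_eq_zero_iff :
    ((e (radialProj x)).2 : ℝ) = 0 ↔ 1 ≤ centreDist (toPlane x.2) := by
  rw [Set.Icc.coe_eq_zero, (he _).1, radialProj, radialParam_eq_zero_iff]

lemma coe_apply_radialProj_eq_one_iff :
    ((e (radialProj x)).2 : ℝ) = 1 ↔ centreDist (toPlane x.2) = 0 := by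
  rw [Set.Icc.coe_eq_one, (he _).2, radialProj, radialParam_eq_one_iff]

lemma min_centreDist_stabilisation :
    min (centreDist (toPlane (stabilisation e x).2)) 1 = 1 - (e (radialProj x)).2 :=
  min_centreDist_stabPlane (e (radialProj x)).2.2
    (he.coe_apply_radialProj_eq_zero_iff x).mpr (he.coe_apply_radialProj_eq_one_iff x).mpr

lemma snd_snd_stabilisation_eq_zero_iff : (stabilisation e x).2.2 = 0 ↔ x.2.2 = 0 := by
  rw [← Set.Icc.coe_eq_zero, ← Set.Icc.coe_eq_zero]
  exact snd_stabPlane_eq_zero_iff (e (radialProj x)).2.2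
    (he.coe_apply_radialProj_eq_zero_iff x) (he.coe_apply_radialProj_eq_one_iff x).mpr

lemma snd_snd_stabilisation_eq_one_iff : (stabilisation e x).2.2 = 1 ↔ x.2.2 = 1 := by
  rw [← Set.Icc.coe_eq_one, ← Set.Icc.coe_eq_one]
  exact snd_stabPlane_eq_one_iff
    (he.coe_apply_radialProj_eq_zero_iff x).mpr (he.coe_apply_radialProj_eq_one_iff x)

end PreservesEnds

section Continuity

variable [TopologicalSpace X] [TopologicalSpace Y]

lemma continuous_radialProj : Continuous (radialProj : X × JJ × I → X × I) :=
  continuous_fst.prodMk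
    (continuous_radialParam.comp (isEmbedding_toPlane.continuous.comp continuous_snd))

theorem continuous_uncurry_stabilisation {T : Type*} [TopologicalSpace T]
    {E : T → X × I → Y × I} (hE : Continuous (Function.uncurry E))
    (hends : ∀ τ, PreservesEnds (E τ)) :
    Continuous (Function.uncurry fun τ => stabilisation (E τ)) := by
  have hy : Continuous fun z : T × (X × JJ × I) => E z.1 (radialProj z.2) :=
    hE.comp (continuous_fst.prodMk ((continuous_radialProj (X := X)).comp continuous_snd))
  have hw : Continuous fun z : T × (X × JJ × I) => toPlane z.2.2 :=
    isEmbedding_toPlane.continuous.comp (continuous_snd.comp continuous_snd)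
  refine (continuous_fst.comp hy).prodMk (isEmbedding_toPlane.continuous_iff.mpr ?_)
  exact continuous_stabPlane (continuous_subtype_val.comp (continuous_snd.comp hy)) hw
    (fun z h => ((hends z.1).coe_apply_radialProj_eq_zero_iff z.2).mpr h.ge)
    (fun z h => ((hends z.1).coe_apply_radialProj_eq_one_iff z.2).mpr h)

theorem continuous_stabilisation {e : X × I → Y × I} (he : Continuous e)
    (hends : PreservesEnds e) : Continuous (stabilisation e) :=
  (continuous_uncurry_stabilisation (E := fun _ : Unit => e) (he.comp continuous_snd) fun _ => hends).comp
    (continuous_const.prodMk continuous_id : Continuous fun x : X × JJ × I => ((), x))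

end Continuity

theorem injective_stabilisation {e : X × I → Y × I} (hends : PreservesEnds e)
    (hinj : Function.Injective e) : Function.Injective (stabilisation e) := by
  intro x x' h
  have hlevel : ((e (radialProj x)).2 : ℝ) = (e (radialProj x')).2 := by
    have := hends.min_centreDist_stabilisation x
    rw [h, hends.min_centreDist_stabilisation x'] at this
    linarith
  have hpoint := congrArg Prod.fst h
  have hq : radialProj x = radialProj x' := hinj (Prod.ext hpoint (Subtype.ext hlevel))
  have hplane : stabPlane (e (radialProj x)).2 (toPlane x.2)
      = stabPlane (e (radialProj x)).2 (toPlane x'.2) := by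
    have h2 : toPlane (stabSquare (e (radialProj x)).2 x.2)
        = toPlane (stabSquare (e (radialProj x')).2 x'.2) := congrArg (fun y => toPlane y.2) h
    rwa [← hq] at h2
  have hdist : min (centreDist (toPlane x.2)) 1 = min (centreDist (toPlane x'.2)) 1 := by
    have := congrArg (fun q : X × I => (q.2 : ℝ)) hq
    simp only [radialProj, coe_radialParam] at this
    linarith
  have hp := congrArg Prod.fst hq
  refine Prod.ext hp (isEmbedding_toPlane.injective ?_)
  exact stabPlane_inj_of_min_centreDist_eq
    (hends.coe_apply_radialProj_eq_zero_iff x).mpr (hends.coe_apply_radialProj_eq_one_iff x).mp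
    hdist hplane


section Concordance

variable {M : Type} [TopologicalSpace M] {P A : Set M} {e : P × I → M × I}

theorem isSigmaOf_stabilisation (he : IsConcMap P A e) : IsSigmaOf P e (stabilisation e) := by
  obtain ⟨-, hends, V, -, hV, hVe⟩ := he
  refine ⟨fun p s t r θ _ hst => ?_, fun p s t hD2 => ?_⟩
  · have hst : toPlane (s, t) = Lam (r, θ) := hst
    have hr : radialProj (p, s, t) = (p, r) := by
      rw [radialProj, hst, radialParam_Lam]
    refine ⟨by rw [stabilisation, hr], ?_⟩
    change stabPlane (e (radialProj (p, s, t))).2 (toPlane (s, t)) = _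
    rw [hr, hst]
    exact stabPlane_Lam r.2 fun h1 =>
      Set.Icc.coe_eq_one.mpr ((hends _).2.mpr (Set.Icc.coe_eq_one.mp h1))
  · refine stabilisation_eq_of_apply_radialProj (f := Subtype.val) ?_
    have h0 : radialProj (p, s, t) = (p, 0) :=
      Prod.ext rfl (radialParam_eq_zero_iff.mpr (one_le_centreDist_of_mem_D2 hD2))
    rw [h0]
    exact hVe _ (hV (Or.inl rfl))

theorem isConcMapJ_stabilisation (he : IsConcMap P A e) : IsConcMapJ P A (stabilisation e) := by
  obtain ⟨hc, hends, V, hVo, hV, hVe⟩ := he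
  refine ⟨continuous_stabilisation hc hends,
    fun x => ⟨PreservesEnds.snd_snd_stabilisation_eq_zero_iff hends x,
      PreservesEnds.snd_snd_stabilisation_eq_one_iff hends x⟩,
    radialProj ⁻¹' V, hVo.preimage continuous_radialProj, ?_,
    fun x hx => stabilisation_eq_of_apply_radialProj (hVe _ hx)⟩
  have hedge (x : P × JJ × I) (h : 1 ≤ centreDist (toPlane x.2)) : radialProj x ∈ V := by
    change (x.1, radialParam (toPlane x.2)) ∈ V
    rw [radialParam_eq_zero_iff.mpr h]
    exact hV (Or.inl rfl)
  rintro x (hx | hA | hs)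
  · exact hedge x (one_le_centreDist_toPlane (Or.inl hx))
  · exact hV (Or.inr hA)
  · exact hedge x (one_le_centreDist_toPlane (Or.inr hs))

end Concordance

end Stabilisation

theorem statement13_general {M : Type} [TopologicalSpace M] (P A : Set M)
    (hPcompact : IsCompact P) (hPt2 : T2Space ↥P) :
    -- there is a map S = σ from CF(P,M) to CF(P×J, M×J) (the latter relative to
    -- (A×J) ∪ (P×{−1,1})), whose values are given by the two defining clauses of the
    -- stabilisation map, such that
    ∃ S : {φ : C(↥P × ↥I, M × ↥I) // IsConcMap P A ⇑φ} →
          {F : C(↥P × ↥JJ × ↥I, M × ↥JJ × ↥I) // IsConcMapJ P A ⇑F},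
      (∀ φ : {φ : C(↥P × ↥I, M × ↥I) // IsConcMap P A ⇑φ},
        IsSigmaOf P ⇑φ.1 ⇑(S φ).1) ∧
      -- S is continuous, and
      Continuous S ∧
      -- S restricts to a map between the subspaces of injective concordance maps
      (∀ φ : {φ : C(↥P × ↥I, M × ↥I) // IsConcMap P A ⇑φ},
        Function.Injective ⇑φ.1 → Function.Injective ⇑(S φ).1) := by
  have : CompactSpace P := isCompact_iff_compactSpace.mp hPcompact
  have hjoint : Continuous (Function.uncurry
      fun φ : {φ : C(↥P × ↥I, M × ↥I) // IsConcMap P A ⇑φ} => Stabilisation.stabilisation ⇑φ.1) :=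
    Stabilisation.continuous_uncurry_stabilisation
      (continuous_eval.comp (continuous_subtype_val.prodMap continuous_id)) fun φ => φ.2.2.1
  refine ⟨fun φ => ⟨(ContinuousMap.curry ⟨_, hjoint⟩) φ,
      Stabilisation.isConcMapJ_stabilisation φ.2⟩,
    fun φ => Stabilisation.isSigmaOf_stabilisation φ.2,
    (ContinuousMap.curry ⟨_, hjoint⟩).continuous.subtype_mk _,
    fun φ => Stabilisation.injective_stabilisation φ.2.2.1⟩

theorem statement13 {M : Type} [TopologicalSpace M] (P A : Set M) (hAP : A ⊆ P)
    (hPcompact : IsCompact P) (hPt2 : T2Space ↥P) :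
    -- there is a map S = σ from CF(P,M) to CF(P×J, M×J) (the latter relative to
    -- (A×J) ∪ (P×{−1,1})), whose values are given by the two defining clauses of the
    -- stabilisation map, such that
    ∃ S : {φ : C(↥P × ↥I, M × ↥I) // IsConcMap P A ⇑φ} →
          {F : C(↥P × ↥JJ × ↥I, M × ↥JJ × ↥I) // IsConcMapJ P A ⇑F},
      (∀ φ : {φ : C(↥P × ↥I, M × ↥I) // IsConcMap P A ⇑φ},
        IsSigmaOf P ⇑φ.1 ⇑(S φ).1) ∧
      -- S is continuous, and
      Continuous S ∧
      -- S restricts to a map between the subspaces of injective concordance maps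
      (∀ φ : {φ : C(↥P × ↥I, M × ↥I) // IsConcMap P A ⇑φ},
        Function.Injective ⇑φ.1 → Function.Injective ⇑(S φ).1) :=
  statement13_general P A hPcompact hPt2
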